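/- arXiv:2111.13658 — 2 statements merged into one kernel-verified Lean document; each statement's English description precedes it below -/
import Mathlib

section
/- Let p be a prime, n ∈ ℕ, let r be an integer with 1 ≤ r ≤ p − 1, and let ι be a finite type with r · Fintype.card ι ≥ (p − 1)·n + 1. Then for every family v : ι → (Fin n → ZMod p), we have ∏_{i ∈ ι} (1 − g^{v i})^r = 0 in the group ring F_p[F_p^n]. -/
/-!
Every `1 - g^w` lies in the ideal `J` generated by the `n` elements `x_i = g^{e_i} - 1`, since
`w ↦ g^w - 1 ∈ J` is closed under addition and the `e_i` generate `F_p^n`. In characteristic `p`,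
`x_i ^ p = g^{p e_i} - 1 = 0`, so by pigeonhole every product of `(p - 1) n + 1` generators of `J`
repeats some `x_i` at least `p` times; hence `J ^ ((p - 1) n + 1) = 0`, while the product in
question lies in `J ^ (r |ι|)`.
-/

open Finset AddMonoidAlgebra

theorem Fintype.prod_comp_eq_zero_of_mul_card_lt {R ι κ : Type*} [CommMonoidWithZero R]
    [Fintype ι] [Fintype κ] {x : ι → R} {m : ℕ} (hx : ∀ i, x i ^ (m + 1) = 0) (g : κ → ι)
    (hcard : m * Fintype.card ι < Fintype.card κ) : ∏ k, x (g k) = 0 := by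
  classical
  obtain ⟨i, hi⟩ := Fintype.exists_lt_card_fiber_of_mul_lt_card g (mul_comm m _ ▸ hcard)
  rw [← Finset.prod_fiberwise' univ g x]
  simp only [prod_const]
  exact prod_eq_zero (mem_univ i) (pow_eq_zero_of_le hi (hx i))

theorem Ideal.span_range_pow_eq_bot {R ι : Type*} [CommSemiring R] [Fintype ι] {x : ι → R}
    {m : ℕ} (hx : ∀ i, x i ^ (m + 1) = 0) :
    Ideal.span (Set.range x) ^ (m * Fintype.card ι + 1) = ⊥ := by
  rw [Ideal.span, Submodule.span_pow, ← le_bot_iff, Submodule.span_le]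
  intro a ha
  obtain ⟨f, hf, rfl⟩ := Set.mem_pow_iff_prod.1 ha
  choose g hg using hf
  simp only [← hg]
  exact Fintype.prod_comp_eq_zero_of_mul_card_lt hx g (by simp)

namespace AddMonoidAlgebra

instance charP {k G : Type*} [Semiring k] [AddZeroClass G] (p : ℕ) [CharP k p] :
    CharP k[G] p :=
  charP_of_injective_ringHom (f := singleZeroRingHom) single_right_injective p

theorem single_sub_one_pow_char {k G : Type*} [CommRing k] [AddCommMonoid G] (p : ℕ)
    [Fact p.Prime] [CharP k p] (g : G) :
    (single g 1 - 1 : k[G]) ^ p = single (p • g) 1 - 1 := by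
  rw [sub_pow_char, single_pow, one_pow, one_pow]

theorem single_sub_one_mem_of_mem_closure {k G : Type*} [Ring k] [AddMonoid G]
    (I : Ideal k[G]) {s : Set G} (hs : ∀ g ∈ s, single g 1 - 1 ∈ I) {g : G}
    (hg : g ∈ AddSubmonoid.closure s) : single g 1 - 1 ∈ I := by
  induction hg using AddSubmonoid.closure_induction with
  | mem g hg => exact hs g hg
  | zero => simp [one_def]
  | add a b _ _ ha hb =>
    have : (single (a + b) 1 - 1 : k[G]) = single a 1 * (single b 1 - 1) + (single a 1 - 1) := by
      rw [mul_sub, single_mul_single, one_mul, mul_one]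
      abel
    rw [this]
    exact add_mem (I.mul_mem_left _ hb) ha

end AddMonoidAlgebra

theorem ZMod.mem_closure_range_pi_single_one {ι : Type*} [Fintype ι] [DecidableEq ι] {p : ℕ}
    [NeZero p] (w : ι → ZMod p) :
    w ∈ AddSubmonoid.closure (Set.range fun i => Pi.single i (1 : ZMod p)) := by
  rw [← univ_sum_single w]
  refine sum_mem fun i _ => ?_
  rw [← ZMod.natCast_zmod_val (w i), ← nsmul_one, Pi.single_smul]
  exact nsmul_mem (AddSubmonoid.subset_closure (Set.mem_range_self i)) _

theorem stmt_9_general (p : ℕ) (hp : p.Prime) (n : ℕ) (r : ℕ)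
    (ι : Type) [Fintype ι] (hι : (p - 1) * n + 1 ≤ r * Fintype.card ι)
    (v : ι → (Fin n → ZMod p)) :
    ∏ i : ι, ((1 : AddMonoidAlgebra (ZMod p) (Fin n → ZMod p)) -
      AddMonoidAlgebra.single (v i) 1) ^ r = 0 := by
  have := Fact.mk hp
  set x : Fin n → AddMonoidAlgebra (ZMod p) (Fin n → ZMod p) :=
    fun i => single (Pi.single i 1) 1 - 1
  set J := Ideal.span (Set.range x)
  have hx : ∀ i, x i ^ (p - 1 + 1) = 0 := fun i => by
    rw [Nat.sub_add_cancel hp.one_le, single_sub_one_pow_char, ← Pi.single_smul, nsmul_one,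
      ZMod.natCast_self, Pi.single_zero, one_def, sub_self]
  have hJ : J ^ ((p - 1) * n + 1) = ⊥ := by
    simpa only [Fintype.card_fin] using Ideal.span_range_pow_eq_bot hx
  have hmem : ∀ w, 1 - single w 1 ∈ J := fun w => by
    rw [← neg_sub]
    refine J.neg_mem <|
      single_sub_one_mem_of_mem_closure J ?_ (ZMod.mem_closure_range_pi_single_one w)
    rintro _ ⟨i, rfl⟩
    exact Ideal.subset_span ⟨i, rfl⟩
  have hprod : ∏ i, (1 - single (v i) 1) ^ r ∈ J ^ (r * Fintype.card ι) := by
    have := Ideal.prod_mem_prod (s := univ) fun i _ => Ideal.pow_mem_pow (hmem (v i)) r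
    rwa [prod_const, card_univ, ← pow_mul] at this
  exact (Ideal.mem_bot).1 (hJ ▸ Ideal.pow_le_pow_right hι hprod)

theorem stmt_9 (p : ℕ) (hp : p.Prime) (n : ℕ) (r : ℕ) (hr1 : 1 ≤ r) (hrp : r ≤ p - 1)
    (ι : Type) [Fintype ι] (hι : (p - 1) * n + 1 ≤ r * Fintype.card ι)
    (v : ι → (Fin n → ZMod p)) :
    ∏ i : ι, ((1 : AddMonoidAlgebra (ZMod p) (Fin n → ZMod p)) -
      AddMonoidAlgebra.single (v i) 1) ^ r = 0 :=
  stmt_9_general p hp n r ι hι v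
end

section
/- Let p be a prime, let r be an integer with 1 ≤ r ≤ p − 1, let A ⊆ ZMod p be an r-arithmetic set, let ι be a finite type, and let v : ι → (Fin n → ZMod p) be an (r, F_p)-irredundant family. Then for every x in the F_p-linear span of {v i : i ∈ ι} there exists a : ι → ZMod p with a i ∈ A for every i ∈ ι and x = Σ_{i ∈ ι} (a i) • (v i). -/
/-- The family `v` is `(r, F_p)`-vanishing: `∏ i, (1 - g^{v i})^r = 0` in the
group ring `F_p[F_p^n]`. -/
def FpVanishing (p n r : ℕ) {ι : Type} [Fintype ι] (v : ι → (Fin n → ZMod p)) : Prop :=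
  ∏ i : ι, ((1 : AddMonoidAlgebra (ZMod p) (Fin n → ZMod p)) -
    AddMonoidAlgebra.single (v i) 1) ^ r = 0

/-- The family `v` is `(r, F_p)`-irredundant: it is `(r, F_p)`-vanishing, but the
corresponding product over any proper subset of the index set is nonzero. -/
def FpIrredundant (p n r : ℕ) {ι : Type} [Fintype ι] (v : ι → (Fin n → ZMod p)) : Prop :=
  FpVanishing p n r v ∧
    ∀ S : Finset ι, S ≠ Finset.univ →
      ∏ i ∈ S, ((1 : AddMonoidAlgebra (ZMod p) (Fin n → ZMod p)) -
        AddMonoidAlgebra.single (v i) 1) ^ r ≠ 0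

/-- `A ⊆ ZMod p` is `r`-arithmetic. -/
def IsArithSet (p : ℕ) (r : ℕ) (A : Set (ZMod p)) : Prop :=
  (∀ a ∈ A, ∃ b : ZMod p, b ≠ 0 ∧ ∀ i : ℤ, -(r : ℤ) ≤ i → i ≤ (r : ℤ) → a + i • b ∈ A) ∧
  (∀ a : ZMod p, a ∉ A → ∃ b ∈ A, ∀ i : ℤ, 1 ≤ i → i ≤ (r : ℤ) → a + i • b ∈ A)

/-!
Write `x = ∑ a i • v i` and repair the coefficients lying outside `A` one at a time.
Rescaling every `v i` by some `c i ≠ 0` does not change which of the products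
`∏ (1 - g^{c i • v i})^r` vanish, because `1 - g^u` and `1 - g^{c • u}` divide each other.
For the rescaled family `w`, irredundancy gives `Q = ∏_{i ≠ j} (1 - g^{w i})^r ≠ 0` while
`(1 - g^{w j})^r Q = 0`; comparing coefficients, some `z` and `z - m • w j` (`1 ≤ m ≤ r`) both
lie in the support of `Q`, so both are combinations of the `w i`, `i ≠ j`, with coefficients in
`[0, r]`. This yields a relation `∑ d i • w i = 0` with `1 ≤ d j ≤ r` and `|d i| ≤ r`. Taking `c i`
to be the common difference that the `r`-arithmetic property provides at `a i`, the shift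
`a i ↦ a i + d i • c i` keeps `x`, keeps coefficients in `A`, and moves `a j` into `A`.
-/

open Finset
open scoped AddMonoidAlgebra

namespace AddMonoidAlgebra

variable {k G : Type*} [CommRing k]

theorem one_sub_single_dvd_one_sub_single_nsmul [AddCommMonoid G] (u : G) (m : ℕ) :
    (1 - single u 1 : k[G]) ∣ 1 - single (m • u) 1 := by
  simpa [single_pow] using one_sub_dvd_one_sub_pow (single u (1 : k)) m

section AddCommGroup

variable [AddCommGroup G]

theorem support_coeff_one_sub_single_subset [DecidableEq G] (u : G) :
    (1 - single u 1 : k[G]).coeff.support ⊆ {0, u} := by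
  rw [coeff_sub, coeff_single]
  refine Finsupp.support_sub.trans (Finset.union_subset ?_ ?_)
  · exact support_coeff_one_subset.trans (by simp)
  · exact Finsupp.support_single_subset.trans (by simp)

theorem exists_nsmul_eq_of_mem_support_one_sub_single_pow [DecidableEq G] {u z : G} {r : ℕ}
    (hz : z ∈ ((1 - single u 1 : k[G]) ^ r).coeff.support) : ∃ m ≤ r, z = m • u := by
  induction r generalizing z with
  | zero =>
    rw [pow_zero] at hz
    exact ⟨0, le_rfl, by simpa using support_coeff_one_subset hz⟩
  | succ r ih =>
    rw [pow_succ] at hz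
    obtain ⟨y, hy, t, ht, rfl⟩ := Finset.mem_add.mp (support_coeff_mul_subset _ _ hz)
    obtain ⟨m, hm, rfl⟩ := ih hy
    rcases Finset.mem_insert.mp (support_coeff_one_sub_single_subset u ht) with rfl | ht
    · exact ⟨m, by omega, by simp⟩
    · rw [Finset.mem_singleton.mp ht]
      exact ⟨m + 1, by omega, (succ_nsmul u m).symm⟩

theorem exists_eq_sum_nsmul_of_mem_support_prod {ι : Type*} [DecidableEq G] (u : ι → G)
    (r : ℕ) (s : Finset ι) {z : G}
    (hz : z ∈ (∏ i ∈ s, (1 - single (u i) 1 : k[G]) ^ r).coeff.support) :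
    ∃ c : ι → ℕ, (∀ i, c i ≤ r) ∧ z = ∑ i ∈ s, c i • u i := by
  classical
  induction s using Finset.induction generalizing z with
  | empty =>
    refine ⟨0, fun _ => Nat.zero_le r, ?_⟩
    simpa using support_coeff_one_subset (by simpa using hz)
  | insert j s hj ih =>
    rw [prod_insert hj] at hz
    obtain ⟨y, hy, t, ht, rfl⟩ := Finset.mem_add.mp (support_coeff_mul_subset _ _ hz)
    obtain ⟨m, hm, rfl⟩ := exists_nsmul_eq_of_mem_support_one_sub_single_pow hy
    obtain ⟨c, hc, rfl⟩ := ih ht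
    refine ⟨Function.update c j m, fun i => ?_, ?_⟩
    · rcases eq_or_ne i j with rfl | hij
      · simpa using hm
      · simpa [hij] using hc i
    · rw [sum_insert hj, Function.update_self]
      congr 1
      exact sum_congr rfl fun i hi => by rw [Function.update_of_ne (ne_of_mem_of_not_mem hi hj)]

theorem coeff_one_sub_single_pow_mul {u z : G} {r : ℕ} (Q : k[G])
    (hQ : ∀ m : ℕ, 1 ≤ m → m ≤ r → Q.coeff (z - m • u) = 0) :
    ((1 - single u 1) ^ r * Q).coeff z = Q.coeff z := by
  induction r generalizing z with
  | zero => simp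
  | succ r ih =>
    have hz : ((1 - single u 1) ^ r * Q).coeff z = Q.coeff z :=
      ih fun m hm hmr => hQ m hm (by omega)
    have hzu : ((1 - single u 1) ^ r * Q).coeff (z - u) = 0 := by
      rw [ih fun m hm hmr => ?_, ← one_nsmul u, hQ 1 le_rfl (by omega)]
      rw [sub_sub, ← succ_nsmul', hQ (m + 1) (by omega) (by omega)]
    rw [pow_succ', mul_assoc, sub_mul, one_mul, coeff_sub, Finsupp.sub_apply,
      coeff_single_mul_apply, one_mul, neg_add_eq_sub, hz, hzu, sub_zero]

theorem exists_coeff_sub_nsmul_ne_zero {u z : G} {r : ℕ} {Q : k[G]}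
    (h : (1 - single u 1) ^ r * Q = 0) (hz : Q.coeff z ≠ 0) :
    ∃ m : ℕ, 1 ≤ m ∧ m ≤ r ∧ Q.coeff (z - m • u) ≠ 0 := by
  by_contra! hQ
  exact hz (by rw [← coeff_one_sub_single_pow_mul Q hQ, h, coeff_zero, Finsupp.zero_apply])

theorem exists_int_relation_of_prod_eq_zero {ι : Type*} [Fintype ι] [DecidableEq ι]
    (w : ι → G) (r : ℕ) (hvan : ∏ i, (1 - single (w i) 1 : k[G]) ^ r = 0) (j : ι)
    (hj : ∏ i ∈ univ.erase j, (1 - single (w i) 1 : k[G]) ^ r ≠ 0) :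
    ∃ d : ι → ℤ, 1 ≤ d j ∧ (∀ i, -(r : ℤ) ≤ d i ∧ d i ≤ r) ∧ ∑ i, d i • w i = 0 := by
  classical
  rw [← mul_prod_erase univ _ (mem_univ j)] at hvan
  obtain ⟨z, hz⟩ := Finsupp.support_nonempty_iff.mpr (mt coeff_eq_zero.mp hj)
  obtain ⟨m, hm1, hmr, hzm⟩ :=
    exists_coeff_sub_nsmul_ne_zero hvan (Finsupp.mem_support_iff.mp hz)
  obtain ⟨c, hc, hcz⟩ := exists_eq_sum_nsmul_of_mem_support_prod w r _ hz
  obtain ⟨c', hc', hcz'⟩ :=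
    exists_eq_sum_nsmul_of_mem_support_prod w r _ (Finsupp.mem_support_iff.mpr hzm)
  set d : ι → ℤ := fun i => if i = j then m else c' i - c i
  refine ⟨d, by simpa [d] using hm1, fun i => ?_, ?_⟩
  · by_cases hij : i = j
    · simp only [d, if_pos hij]; omega
    · simp only [d, if_neg hij]; have := hc i; have := hc' i; omega
  calc ∑ i, d i • w i = m • w j + ∑ i ∈ univ.erase j, ((c' i : ℤ) - c i) • w i := by
        rw [← add_sum_erase _ _ (mem_univ j)]
        simp only [d, if_pos rfl, natCast_zsmul]
        congr 1
        exact sum_congr rfl fun i hi => by rw [if_neg (ne_of_mem_erase hi)]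
    _ = m • w j + ((z - m • w j) - z) := by
        simp only [sub_smul, sum_sub_distrib, natCast_zsmul]
        rw [← hcz, ← hcz']
    _ = 0 := by abel

end AddCommGroup

section ZModModule

variable {p : ℕ} [Fact p.Prime] [AddCommGroup G] [Module (ZMod p) G]

theorem one_sub_single_dvd_one_sub_single_smul (u : G) (c : ZMod p) :
    (1 - single u 1 : k[G]) ∣ 1 - single (c • u) 1 := by
  rw [← ZMod.natCast_zmod_val c, Nat.cast_smul_eq_nsmul]
  exact one_sub_single_dvd_one_sub_single_nsmul u c.val

theorem prod_one_sub_single_smul_pow_eq_zero_iff {ι : Type*} (s : Finset ι) (c : ι → ZMod p)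
    (hc : ∀ i, c i ≠ 0) (w : ι → G) (r : ℕ) :
    ∏ i ∈ s, (1 - single (c i • w i) 1 : k[G]) ^ r = 0 ↔
      ∏ i ∈ s, (1 - single (w i) 1 : k[G]) ^ r = 0 := by
  constructor <;> refine fun h => zero_dvd_iff.mp (h ▸ prod_dvd_prod_of_dvd _ _ fun i _ => ?_)
  · refine pow_dvd_pow_of_dvd ?_ r
    simpa [inv_smul_smul₀ (hc i)] using one_sub_single_dvd_one_sub_single_smul (c i • w i) (c i)⁻¹
  · exact pow_dvd_pow_of_dvd (one_sub_single_dvd_one_sub_single_smul _ _) r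

end ZModModule

end AddMonoidAlgebra

theorem IsArithSet.exists_step {p r : ℕ} {A : Set (ZMod p)} (hA : IsArithSet p r A)
    (hr : 1 ≤ r) (a : ZMod p) :
    ∃ b : ZMod p, b ≠ 0 ∧ ∀ d : ℤ, -(r : ℤ) ≤ d → d ≤ r → (a ∉ A → 1 ≤ d) → a + d • b ∈ A := by
  by_cases ha : a ∈ A
  · obtain ⟨b, hb, hbA⟩ := hA.1 a ha
    exact ⟨b, hb, fun d hd hdr _ => hbA d hd hdr⟩
  · obtain ⟨b, -, hbA⟩ := hA.2 a ha
    refine ⟨b, fun hb => ha ?_, fun d _ hdr hd => hbA d (hd ha) hdr⟩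
    simpa [hb] using hbA 1 le_rfl (by exact_mod_cast hr)

theorem exists_forall_apply_mem_of_step {ι α : Type*} [Finite ι] {A : Set α}
    {P : (ι → α) → Prop}
    (step : ∀ a, P a → ∀ j, a j ∉ A → ∃ a', P a' ∧ a' j ∈ A ∧ ∀ i, a i ∈ A → a' i ∈ A)
    {a : ι → α} (ha : P a) : ∃ a', P a' ∧ ∀ i, a' i ∈ A := by
  induction h : {i | a i ∉ A}.ncard using Nat.strong_induction_on generalizing a with
  | _ N ih =>
    by_cases hall : ∀ i, a i ∈ A
    · exact ⟨a, ha, hall⟩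
    obtain ⟨j, hj⟩ := not_forall.mp hall
    obtain ⟨a', ha', hj', hgood⟩ := step a ha j hj
    refine ih _ (h ▸ Set.ncard_lt_ncard ?_ (Set.toFinite _)) ha' rfl
    exact ⟨fun i hi hai => hi (hgood i hai), fun hsub => hsub hj hj'⟩

open AddMonoidAlgebra in
theorem FpIrredundant.exists_sum_smul_eq_of_isArithSet {p n r : ℕ} [Fact p.Prime] (hr : 1 ≤ r)
    {A : Set (ZMod p)} (hA : IsArithSet p r A) {ι : Type} [Fintype ι]
    {v : ι → (Fin n → ZMod p)} (hv : FpIrredundant p n r v) (a : ι → ZMod p) (j : ι) :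
    ∃ a' : ι → ZMod p, ∑ i, a' i • v i = ∑ i, a i • v i ∧ a' j ∈ A ∧
      ∀ i, a i ∈ A → a' i ∈ A := by
  classical
  choose c hc0 hcA using fun i => hA.exists_step hr (a i)
  have hvan : ∏ i, (1 - single (c i • v i) 1 : AddMonoidAlgebra (ZMod p) _) ^ r = 0 :=
    (prod_one_sub_single_smul_pow_eq_zero_iff _ c hc0 v r).mpr hv.1
  have hj' :
      ∏ i ∈ univ.erase j, (1 - single (c i • v i) 1 : AddMonoidAlgebra (ZMod p) _) ^ r ≠ 0 :=
    fun h => hv.2 _ (erase_ssubset (mem_univ j)).ne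
      ((prod_one_sub_single_smul_pow_eq_zero_iff _ c hc0 v r).mp h)
  obtain ⟨d, hdj, hd, hsum⟩ := exists_int_relation_of_prod_eq_zero _ r hvan j hj'
  refine ⟨fun i => a i + d i • c i, ?_, hcA j (d j) (hd j).1 (hd j).2 fun _ => hdj,
    fun i hi => hcA i (d i) (hd i).1 (hd i).2 fun h => absurd hi h⟩
  simp only [add_smul, sum_add_distrib, smul_assoc, hsum, add_zero]

theorem stmt_11_general (p : ℕ) (hp : p.Prime) (n : ℕ) (r : ℕ) (hr1 : 1 ≤ r)
    (A : Set (ZMod p)) (hA : IsArithSet p r A)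
    (ι : Type) [Fintype ι] (v : ι → (Fin n → ZMod p)) (hv : FpIrredundant p n r v)
    (x : Fin n → ZMod p) (hx : x ∈ Submodule.span (ZMod p) (Set.range v)) :
    ∃ a : ι → ZMod p, (∀ i, a i ∈ A) ∧ x = ∑ i : ι, a i • v i := by
  have : Fact p.Prime := ⟨hp⟩
  obtain ⟨a₀, ha₀⟩ := (Submodule.mem_span_range_iff_exists_fun (ZMod p)).1 hx
  obtain ⟨a, ha, hA'⟩ := exists_forall_apply_mem_of_step (P := fun a => ∑ i, a i • v i = x)
    (fun a ha j _ => (hv.exists_sum_smul_eq_of_isArithSet hr1 hA a j).imp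
      fun _ h => ⟨h.1.trans ha, h.2⟩) ha₀
  exact ⟨a, hA', ha.symm⟩

theorem stmt_11 (p : ℕ) (hp : p.Prime) (n : ℕ) (r : ℕ) (hr1 : 1 ≤ r) (hrp : r ≤ p - 1)
    (A : Set (ZMod p)) (hA : IsArithSet p r A)
    (ι : Type) [Fintype ι] (v : ι → (Fin n → ZMod p)) (hv : FpIrredundant p n r v)
    (x : Fin n → ZMod p) (hx : x ∈ Submodule.span (ZMod p) (Set.range v)) :
    ∃ a : ι → ZMod p, (∀ i, a i ∈ A) ∧ x = ∑ i : ι, a i • v i :=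
  stmt_11_general p hp n r hr1 A hA ι v hv x hx
end
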